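/- For every w ∈ C^∞(cl Ω; ℝ³) there exists a family of functions w^ε ∈ H¹(Ω; ℝ³) such that ℰ_ε[w^ε] → ℰ[w] as ε → 0, where ℰ_ε[w^ε] denotes the energy of the restriction of w^ε to Ω∖∪_i 𝒫_i^ε. -/

import Mathlib

open MeasureTheory Filter Metric Set
open scoped RealInnerProductSpace ENNReal NNReal Topology

noncomputable section

/-- Euclidean three-space. -/
abbrev E3 : Type := EuclideanSpace ℝ (Fin 3)

/-- The closed prolate spheroid centered at the origin with semi-axis `A` along the
`x`- and `y`-directions and semi-axis `B` along the `z`-direction. -/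
def sph (A B : ℝ) : Set E3 :=
  {x : E3 | (x 0) ^ 2 / A ^ 2 + (x 1) ^ 2 / A ^ 2 + (x 2) ^ 2 / B ^ 2 ≤ 1}

/-- The boundary surface of the spheroid `sph A B`. -/
def sphS (A B : ℝ) : Set E3 :=
  {x : E3 | (x 0) ^ 2 / A ^ 2 + (x 1) ^ 2 / A ^ 2 + (x 2) ^ 2 / B ^ 2 = 1}

/-- Gradient of the defining function of the spheroid (up to a factor `2`). -/
def sphGrad (A B : ℝ) (x : E3) : E3 :=
  (WithLp.equiv 2 (Fin 3 → ℝ)).symm ![x 0 / A ^ 2, x 1 / A ^ 2, x 2 / B ^ 2]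

/-- Outward unit normal to the surface of the spheroid `sph A B`. -/
def sphN (A B : ℝ) (x : E3) : E3 := ‖sphGrad A B x‖⁻¹ • sphGrad A B x

/-- A rotation of `ℝ³`: a linear isometry with determinant one. -/
def IsRotation (R : E3 ≃ₗᵢ[ℝ] E3) : Prop :=
  LinearMap.det (R.toLinearEquiv : E3 →ₗ[ℝ] E3) = 1

/-- A particle: the image of the reference spheroid `sph A B` under `y ↦ c + s • R y`. -/
def part (A B : ℝ) (c : E3) (s : ℝ) (R : E3 ≃ₗᵢ[ℝ] E3) : Set E3 :=
  (fun y => c + s • R y) '' sph A B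

/-- The boundary surface of a particle. -/
def partS (A B : ℝ) (c : E3) (s : ℝ) (R : E3 ≃ₗᵢ[ℝ] E3) : Set E3 :=
  (fun y => c + s • R y) '' sphS A B

/-- The outward unit normal on the surface of a particle. -/
def partN (A B : ℝ) (c : E3) (s : ℝ) (R : E3 ≃ₗᵢ[ℝ] E3) (y : E3) : E3 :=
  R (sphN A B (s⁻¹ • R.symm (y - c)))

/-- Geometric configuration of the dilute ferronematic composite from the paper:
a bounded smooth domain `Ω ⊂ ℝ³`; a reference closed prolate spheroid `𝒫 = sph b a`
with semi-minor axis `b` and semi-major axis `a` (`0 < b < a`), long axis along `z`;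
exponent `1 < α < 2`; constants `0 < d < D`, `g ∈ ℝ`; and, for each `0 < ε < ε₀`,
particles `𝒫ᵢ^ε = xᵢ^ε + ε^α Rᵢ^ε 𝒫` (`i = 1,…,N_ε`) whose centers are `dε`-separated,
at mutual distance at most `Dε`, with the closed balls of radius `dε/2` around the
centers pairwise disjoint and contained in `Ω`, and `N_ε ≤ N ε⁻³`. -/
structure Config where
  Ω : Set E3
  a : ℝ
  b : ℝ
  α : ℝ
  d : ℝ
  D : ℝ
  g : ℝ
  ε₀ : ℝ
  Nε : ℝ → ℕ
  xc : (ε : ℝ) → Fin (Nε ε) → E3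
  Rot : (ε : ℝ) → Fin (Nε ε) → E3 ≃ₗᵢ[ℝ] E3
  NN : ℝ
  hΩo : IsOpen Ω
  hΩne : Ω.Nonempty
  hΩb : Bornology.IsBounded Ω
  hb : 0 < b
  hba : b < a
  hα1 : 1 < α
  hα2 : α < 2
  hd : 0 < d
  hdD : d < D
  hε₀ : 0 < ε₀
  hRot : ∀ ε i, IsRotation (Rot ε i)
  hsep_lo : ∀ ε, 0 < ε → ε < ε₀ → ∀ i j, i ≠ j → d * ε ≤ dist (xc ε i) (xc ε j)
  hsep_hi : ∀ ε, 0 < ε → ε < ε₀ → ∀ i j, i ≠ j → dist (xc ε i) (xc ε j) ≤ D * ε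
  hdisj : ∀ ε, 0 < ε → ε < ε₀ → ∀ i j, i ≠ j →
    Disjoint (Metric.closedBall (xc ε i) (d * ε / 2)) (Metric.closedBall (xc ε j) (d * ε / 2))
  hball : ∀ ε, 0 < ε → ε < ε₀ → ∀ i, Metric.closedBall (xc ε i) (d * ε / 2) ⊆ Ω
  hNN : 0 < NN
  hcount : ∀ ε, 0 < ε → ε < ε₀ → (Nε ε : ℝ) ≤ NN * ε⁻¹ ^ 3

namespace Config

variable (cfg : Config)

/-- The `i`-th particle `𝒫ᵢ^ε`. -/
def particle (ε : ℝ) (i : Fin (cfg.Nε ε)) : Set E3 :=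
  part cfg.b cfg.a (cfg.xc ε i) (ε ^ cfg.α) (cfg.Rot ε i)

/-- The surface `∂𝒫ᵢ^ε` of the `i`-th particle. -/
def surf (ε : ℝ) (i : Fin (cfg.Nε ε)) : Set E3 :=
  partS cfg.b cfg.a (cfg.xc ε i) (ε ^ cfg.α) (cfg.Rot ε i)

/-- The outward unit normal on the surface of the `i`-th particle. -/
def normal (ε : ℝ) (i : Fin (cfg.Nε ε)) (y : E3) : E3 :=
  partN cfg.b cfg.a (cfg.xc ε i) (ε ^ cfg.α) (cfg.Rot ε i) y

/-- The perforated domain `Ω ∖ ∪ᵢ 𝒫ᵢ^ε` occupied by the liquid crystal. -/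
def dom (ε : ℝ) : Set E3 := cfg.Ω \ ⋃ i, cfg.particle ε i

/-- The anchoring surface energy `g_ε ∫_{∪ᵢ∂𝒫ᵢ^ε} (u·ν)² dσ`, `g_ε = g ε^{3−2α}`. -/
def surfE (ε : ℝ) (u : E3 → E3) : ℝ :=
  cfg.g * ε ^ (3 - 2 * cfg.α) *
    ∑ i : Fin (cfg.Nε ε), ∫ y in cfg.surf ε i, ⟪u y, cfg.normal ε i y⟫ ^ 2 ∂μH[2]

/-- The liquid crystal energy
`ℰ_ε[u] = ∫_{Ω∖∪ᵢ𝒫ᵢ^ε} (|∇u|² + (1−|u|²)²) dV + g_ε ∫_{∪ᵢ∂𝒫ᵢ^ε} (u·ν)² dσ`. -/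
def lcE (ε : ℝ) (u : E3 → E3) : ℝ :=
  (∫ x in cfg.dom ε, (‖fderiv ℝ u x‖ ^ 2 + (1 - ‖u x‖ ^ 2) ^ 2)) + cfg.surfE ε u

end Config

/-- Membership in `H¹(s; ℝ³)` (as a class of everywhere-defined representatives):
continuity, differentiability on `s`, and square integrability of the function and of
its gradient on `s`. -/
def H1on (s : Set E3) (u : E3 → E3) : Prop :=
  Continuous u ∧ (∀ x ∈ s, DifferentiableAt ℝ u x) ∧
    IntegrableOn (fun x => ‖u x‖ ^ 2) s ∧
    IntegrableOn (fun x => ‖fderiv ℝ u x‖ ^ 2) s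

/-- Admissible functions for the variational problems: `H¹` regularity on the perforated
domain (together with the `L⁴` integrability granting a finite Ginzburg–Landau term) and
the Dirichlet condition `u = U` on `∂Ω`. -/
def Config.Adm (cfg : Config) (U : E3 → E3) (ε : ℝ) (u : E3 → E3) : Prop :=
  H1on (cfg.dom ε) u ∧ IntegrableOn (fun x => ‖u x‖ ^ 4) (cfg.dom ε) ∧
    Set.EqOn u U (frontier cfg.Ω)

/-- Assumption (5) of the paper for the anchoring matrix: the matrix-valued measures
`A^ε = g ε³ Σᵢ δ(x−xᵢ^ε) Rᵢ^ε (∫_{∂𝒫} ν⊗ν dσ) (Rᵢ^ε)ᵀ` converge in the sense of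
distributions to `A ∈ L^∞(Ω)`; tested on squares of continuous vector fields this reads:
for every `w ∈ C(cl Ω; ℝ³)`,
`g ε³ Σᵢ ∫_{∂𝒫} (w(xᵢ^ε) · Rᵢ^ε ν)² dσ → ∫_Ω A w · w dV` as `ε → 0⁺`. -/
def Config.surfConv (cfg : Config) (A : E3 → E3 →L[ℝ] E3) : Prop :=
  ∀ w : E3 → E3, ContinuousOn w (closure cfg.Ω) →
    Tendsto (fun ε : ℝ => cfg.g * ε ^ (3 : ℕ) *
        ∑ i : Fin (cfg.Nε ε),
          ∫ y in sphS cfg.b cfg.a,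
            ⟪w (cfg.xc ε i), cfg.Rot ε i (sphN cfg.b cfg.a y)⟫ ^ 2 ∂μH[2])
      (𝓝[>] (0 : ℝ)) (𝓝 (∫ x in cfg.Ω, ⟪A x (w x), w x⟫))

/-- `A` is (essentially) bounded and measurable on `Ω`: `A ∈ L^∞(Ω; ℝ^{3×3})`. -/
def Linfty (Ω : Set E3) (A : E3 → E3 →L[ℝ] E3) : Prop :=
  AEStronglyMeasurable A (volume.restrict Ω) ∧ ∃ CA : ℝ, ∀ x ∈ Ω, ‖A x‖ ≤ CA

/-- The homogenized liquid crystal energy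
`ℰ[u] = ∫_Ω (|∇u|² + (1−|u|²)² + A u · u) dV`. -/
def ElimE (Ω : Set E3) (A : E3 → E3 →L[ℝ] E3) (u : E3 → E3) : ℝ :=
  ∫ x in Ω, (‖fderiv ℝ u x‖ ^ 2 + (1 - ‖u x‖ ^ 2) ^ 2 + ⟪A x (u x), u x⟫)


/-! ### Auxiliary lemmas -/

open scoped Pointwise

abbrev E2 : Type := EuclideanSpace ℝ (Fin 2)

lemma norm_sq_E2 (p : E2) : ‖p‖^2 = ∑ j, (p j)^2 := by
  rw [EuclideanSpace.norm_eq, Real.sq_sqrt (by positivity)]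
  simp [Real.norm_eq_abs, sq_abs]

lemma norm_sq_E3 (x : E3) : ‖x‖^2 = ∑ j, (x j)^2 := by
  rw [EuclideanSpace.norm_eq, Real.sq_sqrt (by positivity)]
  simp [Real.norm_eq_abs, sq_abs]

lemma hm_image_similarity (c : E3) {s : ℝ} (hs : s ≠ 0) (R : E3 ≃ₗᵢ[ℝ] E3) (B : Set E3) :
    μH[2] ((fun y => c + s • R y) '' B) = (‖s‖₊ : ℝ≥0∞) ^ (2:ℕ) * μH[2] B := by
  have h1 : (fun y => c + s • R y) '' B = (fun z => c + z) '' ((s • ·) '' (R '' B)) := by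
    simp [Set.image_image]
  rw [h1]
  have hiso : Isometry (fun z : E3 => c + z) := Isometry.of_dist_eq (fun a b => dist_add_left c a b)
  rw [hiso.hausdorffMeasure_image (Or.inl (by norm_num))]
  have h2 : (s • ·) '' (R '' B) = s • (R '' B) := rfl
  rw [h2, Measure.hausdorffMeasure_smul₀ (by norm_num : (0:ℝ) ≤ 2) hs,
    R.isometry.hausdorffMeasure_image (Or.inr R.surjective)]
  rw [ENNReal.smul_def, smul_eq_mul]
  congr 1
  rw [show (2:ℝ) = ((2:ℕ):ℝ) by norm_num, NNReal.rpow_natCast, ENNReal.coe_pow]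

/-- The similarity `y ↦ c + s • R y` as a homeomorphism. -/
def simHomeo (c : E3) {s : ℝ} (hs : s ≠ 0) (R : E3 ≃ₗᵢ[ℝ] E3) : E3 ≃ₜ E3 :=
  (R.toHomeomorph.trans (Homeomorph.smulOfNeZero s hs)).trans
    (Homeomorph.addLeft c)

lemma simHomeo_apply (c : E3) {s : ℝ} (hs : s ≠ 0) (R : E3 ≃ₗᵢ[ℝ] E3) (y : E3) :
    simHomeo c hs R y = c + s • R y := rfl

lemma simHomeo_symm_apply (c : E3) {s : ℝ} (hs : s ≠ 0) (R : E3 ≃ₗᵢ[ℝ] E3) (z : E3) :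
    (simHomeo c hs R).symm z = (-(s⁻¹ • R.symm c)) + s⁻¹ • R.symm z := by
  simp only [simHomeo, Homeomorph.symm_trans_apply, Homeomorph.coe_addLeft,
    Homeomorph.addLeft_symm]
  show R.symm (s⁻¹ • (-c + z)) = _
  rw [smul_add, map_add, LinearIsometryEquiv.map_smul, LinearIsometryEquiv.map_smul,
    map_neg, smul_neg]

lemma map_simHomeo (c : E3) {s : ℝ} (hs : s ≠ 0) (R : E3 ≃ₗᵢ[ℝ] E3) :
    Measure.map (simHomeo c hs R) μH[2] = ((‖s‖₊ : ℝ≥0∞) ^ (2:ℕ))⁻¹ • μH[2] := by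
  ext A hA
  rw [Measure.map_apply (simHomeo c hs R).continuous.measurable hA,
    Measure.smul_apply, smul_eq_mul]
  have h0 : (simHomeo c hs R) ⁻¹' A = (simHomeo c hs R).symm '' A := by
    rw [Homeomorph.image_symm]
  rw [h0]
  have h2 : (simHomeo c hs R).symm '' A
      = (fun y => (-(s⁻¹ • R.symm c)) + s⁻¹ • R.symm y) '' A := by
    apply Set.image_congr
    intro y _
    exact simHomeo_symm_apply c hs R y
  rw [h2, hm_image_similarity _ (inv_ne_zero hs) R.symm A]
  congr 1
  rw [nnnorm_inv, ENNReal.coe_inv (by simpa using hs), ENNReal.inv_pow]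

lemma setIntegral_sim (c : E3) {s : ℝ} (hs : 0 < s) (R : E3 ≃ₗᵢ[ℝ] E3) (S : Set E3)
    (f : E3 → ℝ) :
    ∫ y in (fun y => c + s • R y) '' S, f y ∂μH[2]
      = s ^ 2 * ∫ y in S, f (c + s • R y) ∂μH[2] := by
  have hsne : s ≠ 0 := hs.ne'
  have hμ : (μH[2] : Measure E3)
      = (‖s‖₊ : ℝ≥0∞) ^ (2:ℕ) • Measure.map (simHomeo c hsne R) μH[2] := by
    rw [map_simHomeo c hsne R, smul_smul, ENNReal.mul_inv_cancel, one_smul]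
    · simp [pow_eq_zero_iff, hsne]
    · exact (ENNReal.pow_ne_top ENNReal.coe_ne_top)
  calc ∫ y in (fun y => c + s • R y) '' S, f y ∂μH[2]
      = ∫ y in (fun y => c + s • R y) '' S, f y
          ∂((‖s‖₊ : ℝ≥0∞) ^ (2:ℕ) • Measure.map (simHomeo c hsne R) μH[2]) := by rw [← hμ]
    _ = ((‖s‖₊ : ℝ≥0∞) ^ (2:ℕ)).toReal
          • ∫ y in (fun y => c + s • R y) '' S, f y
            ∂(Measure.map (simHomeo c hsne R) μH[2]) := by
        rw [Measure.restrict_smul, integral_smul_measure]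
    _ = s ^ 2 * ∫ x in (simHomeo c hsne R) ⁻¹' ((fun y => c + s • R y) '' S),
          f (c + s • R x) ∂μH[2] := by
        rw [(simHomeo c hsne R).measurableEmbedding.setIntegral_map]
        congr 1
        · simp [Real.nnnorm_of_nonneg hs.le, ENNReal.toReal_pow]
    _ = s ^ 2 * ∫ y in S, f (c + s • R y) ∂μH[2] := by
        congr 1
        have h3 : (fun y => c + s • R y) '' S = (simHomeo c hsne R) '' S := rfl
        rw [h3, Homeomorph.preimage_image]

lemma hm_closedBall_E2_lt_top : μH[2] (closedBall (0:E2) 1) < ∞ := by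
  set e : (Fin 2 → ℝ) → E2 := ⇑(WithLp.equiv 2 (Fin 2 → ℝ)).symm with he
  have hlip : LipschitzWith 2 e := by
    apply LipschitzWith.of_dist_le_mul
    intro x y
    rw [EuclideanSpace.dist_eq]
    have hb : ∀ i : Fin 2, dist (e x i) (e y i) ^ 2 ≤ dist x y ^ 2 := by
      intro i
      have h0 : dist (e x i) (e y i) = dist (x i) (y i) := rfl
      rw [h0]
      exact pow_le_pow_left₀ dist_nonneg (dist_le_pi_dist x y i) 2
    calc √(∑ i, dist (e x i) (e y i) ^ 2) ≤ √(2 * dist x y ^ 2) := by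
          apply Real.sqrt_le_sqrt
          rw [Fin.sum_univ_two]
          linarith [hb 0, hb 1]
      _ ≤ 2 * dist x y := by
          rw [show (2:ℝ) * dist x y = √((2 * dist x y)^2) by
            rw [Real.sqrt_sq (by positivity)]]
          apply Real.sqrt_le_sqrt; nlinarith [dist_nonneg (x := x) (y := y)]
  have hsub : closedBall (0:E2) 1 ⊆ e '' (closedBall (0:Fin 2 → ℝ) 1) := by
    intro z hz
    refine ⟨WithLp.equiv 2 (Fin 2 → ℝ) z, ?_, rfl⟩
    rw [mem_closedBall_zero_iff] at hz ⊢
    rw [pi_norm_le_iff_of_nonneg (by norm_num)]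
    intro i
    have h1 : ‖z i‖ ≤ ‖z‖ := by
      rw [EuclideanSpace.norm_eq]
      rw [show ‖z i‖ = √(‖z i‖^2) by rw [Real.sqrt_sq (norm_nonneg _)]]
      apply Real.sqrt_le_sqrt
      have h2 : ∀ j, 0 ≤ ‖z j‖ ^ 2 := fun j => by positivity
      rcases i with ⟨iv, hiv⟩
      interval_cases iv <;> simp [Fin.sum_univ_two] <;> nlinarith [h2 0, h2 1]
    exact h1.trans hz
  calc μH[2] (closedBall (0:E2) 1) ≤ μH[2] (e '' (closedBall (0:Fin 2 → ℝ) 1)) :=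
        measure_mono hsub
    _ ≤ (2:ℝ≥0) ^ (2:ℝ) * μH[2] (closedBall (0:Fin 2 → ℝ) 1) :=
        hlip.hausdorffMeasure_image_le (by norm_num) _
    _ < ∞ := by
        have hvol : (μH[2] : Measure (Fin 2 → ℝ)) = volume := by
          rw [← MeasureTheory.hausdorffMeasure_pi_real (ι := Fin 2)]
          norm_num
        rw [hvol]
        exact ENNReal.mul_lt_top
          (ENNReal.rpow_lt_top_of_nonneg (by norm_num) ENNReal.coe_ne_top)
          (Metric.isBounded_closedBall.measure_lt_top)

lemma sqrt_diff_le {u v : ℝ} (hu : 1/4 ≤ u) (hv : 1/4 ≤ v) : |√u - √v| ≤ |u - v| := by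
  wlog h : v ≤ u generalizing u v
  · rw [abs_sub_comm, abs_sub_comm u v]; exact this hv hu (by linarith)
  have h2 : (1:ℝ)/2 ≤ √u := by
    rw [show (1:ℝ)/2 = √(1/4) by
      rw [show (1:ℝ)/4 = (1/2)^2 by norm_num, Real.sqrt_sq]; norm_num]
    exact Real.sqrt_le_sqrt hu
  have h3 : (1:ℝ)/2 ≤ √v := by
    rw [show (1:ℝ)/2 = √(1/4) by
      rw [show (1:ℝ)/4 = (1/2)^2 by norm_num, Real.sqrt_sq]; norm_num]
    exact Real.sqrt_le_sqrt hv
  have hsv : √v ≤ √u := Real.sqrt_le_sqrt h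
  have hid : (√u - √v) * (√u + √v) = u - v := by
    have hu' : √u ^ 2 = u := Real.sq_sqrt (by linarith)
    have hv' : √v ^ 2 = v := Real.sq_sqrt (by linarith)
    ring_nf; nlinarith [hu', hv']
  rw [abs_of_nonneg (by linarith), abs_of_nonneg (by linarith)]
  nlinarith [hid]

/-- the height function over the patch -/
def pHt (p : E2) : ℝ := √(1 - ‖p‖^2)

/-- the parametrization of the `k,σ` patch of the unit sphere -/
def pPatch (k : Fin 3) (σ : ℝ) (p : E2) : E3 :=
  (WithLp.equiv 2 (Fin 3 → ℝ)).symm (k.insertNth (σ * pHt p) (fun j => p j))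

/-- the patch domain -/
def pDom : Set E2 := {p | ‖p‖^2 ≤ 2/3}

lemma pPatch_coord_same (k : Fin 3) (σ : ℝ) (p : E2) :
    pPatch k σ p k = σ * pHt p := by
  simp [pPatch, Fin.insertNth_apply_same]

lemma pPatch_coord_succAbove (k : Fin 3) (σ : ℝ) (p : E2) (j : Fin 2) :
    pPatch k σ p (k.succAbove j) = p j := by
  simp [pPatch, Fin.insertNth_apply_succAbove]

lemma pHt_lip {p q : E2} (hp : p ∈ pDom) (hq : q ∈ pDom) :
    |pHt p - pHt q| ≤ 2 * ‖p - q‖ := by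
  have h1 : |pHt p - pHt q| ≤ |(1 - ‖p‖^2) - (1 - ‖q‖^2)| := by
    apply sqrt_diff_le <;> [skip; skip] <;>
      simp only [pDom, Set.mem_setOf_eq] at hp hq <;> linarith
  have hpn : ‖p‖ ≤ 1 := by
    nlinarith [norm_nonneg p, (show ‖p‖^2 ≤ 2/3 from hp)]
  have hqn : ‖q‖ ≤ 1 := by
    nlinarith [norm_nonneg q, (show ‖q‖^2 ≤ 2/3 from hq)]
  have h2 : |(1 - ‖p‖^2) - (1 - ‖q‖^2)| = |‖q‖^2 - ‖p‖^2| := by ring_nf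
  have h3 : |‖q‖^2 - ‖p‖^2| ≤ (‖q‖ + ‖p‖) * ‖p - q‖ := by
    have h4 : ‖q‖^2 - ‖p‖^2 = (‖q‖ + ‖p‖) * (‖q‖ - ‖p‖) := by ring
    rw [h4, abs_mul, abs_of_nonneg (by positivity)]
    gcongr
    calc |‖q‖ - ‖p‖| ≤ ‖q - p‖ := abs_norm_sub_norm_le q p
      _ = ‖p - q‖ := norm_sub_rev q p
  calc |pHt p - pHt q| ≤ |‖q‖^2 - ‖p‖^2| := by rw [← h2]; exact h1
    _ ≤ (‖q‖ + ‖p‖) * ‖p - q‖ := h3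
    _ ≤ 2 * ‖p - q‖ := by nlinarith [norm_nonneg (p - q)]

lemma pPatch_lipOn (k : Fin 3) {σ : ℝ} (hσ : σ = 1 ∨ σ = -1) :
    LipschitzOnWith 3 (pPatch k σ) pDom := by
  rw [lipschitzOnWith_iff_dist_le_mul]
  intro p hp q hq
  rw [dist_eq_norm, dist_eq_norm]
  have hσ2 : σ^2 = 1 := by rcases hσ with h | h <;> rw [h] <;> norm_num
  have hsum : ‖pPatch k σ p - pPatch k σ q‖^2
      = (σ * pHt p - σ * pHt q)^2 + ‖p - q‖^2 := by
    rw [norm_sq_E3, norm_sq_E2]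
    rw [Fin.sum_univ_succAbove (fun i => ((pPatch k σ p - pPatch k σ q) i)^2) k]
    congr 1
    · congr 1
      show pPatch k σ p k - pPatch k σ q k = _
      rw [pPatch_coord_same, pPatch_coord_same]
    · apply Finset.sum_congr rfl
      intro j _
      congr 1
      show pPatch k σ p (k.succAbove j) - pPatch k σ q (k.succAbove j) = _
      rw [pPatch_coord_succAbove, pPatch_coord_succAbove]; rfl
  have hht : (σ * pHt p - σ * pHt q)^2 ≤ 4 * ‖p - q‖^2 := by
    have h5 : (σ * pHt p - σ * pHt q)^2 = σ^2 * (pHt p - pHt q)^2 := by ring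
    rw [h5, hσ2, one_mul]
    have h6 := pHt_lip hp hq
    have h0 : |pHt p - pHt q|^2 ≤ (2 * ‖p - q‖)^2 :=
      pow_le_pow_left₀ (abs_nonneg _) h6 2
    rw [sq_abs] at h0
    nlinarith [h0]
  have h7 : ‖pPatch k σ p - pPatch k σ q‖^2 ≤ (3 * ‖p - q‖)^2 := by
    rw [hsum]; nlinarith [norm_nonneg (p - q)]
  have h9 : ‖pPatch k σ p - pPatch k σ q‖ ≤ 3 * ‖p - q‖ := by
    nlinarith [norm_nonneg (pPatch k σ p - pPatch k σ q), norm_nonneg (p - q)]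
  simpa using h9

lemma sphere_subset_patches :
    sphere (0:E3) 1 ⊆ ⋃ k : Fin 3, (pPatch k 1 '' pDom ∪ pPatch k (-1) '' pDom) := by
  intro x hx
  have hx1 : ‖x‖ = 1 := by simpa using hx
  have hsum : ∑ i, (x i)^2 = 1 := by rw [← norm_sq_E3, hx1]; norm_num
  have hk : ∃ k : Fin 3, 1/3 ≤ (x k)^2 := by
    by_contra h
    push_neg at h
    have := h 0; have := h 1; have := h 2
    rw [Fin.sum_univ_three] at hsum
    linarith
  obtain ⟨k, hk⟩ := hk
  set p : E2 := (WithLp.equiv 2 (Fin 2 → ℝ)).symm (fun j => x (k.succAbove j)) with hpdef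
  have hpj : ∀ j, p j = x (k.succAbove j) := fun j => rfl
  have hsplit : (x k)^2 + ∑ j, (p j)^2 = 1 := by
    rw [← hsum, Fin.sum_univ_succAbove (fun i => (x i)^2) k]
    simp only [hpj]
  have hpD : p ∈ pDom := by
    simp only [pDom, Set.mem_setOf_eq]
    rw [norm_sq_E2]
    linarith
  have hht : pHt p = |x k| := by
    rw [pHt, norm_sq_E2, show 1 - ∑ j, (p j)^2 = (x k)^2 by linarith]
    exact Real.sqrt_sq_eq_abs _
  have hx_eq : ∀ σ : ℝ, σ * pHt p = x k → x = pPatch k σ p := by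
    intro σ hσ
    ext i
    refine Fin.succAboveCases k ?_ ?_ i
    · rw [pPatch_coord_same, hσ]
    · intro j
      rw [pPatch_coord_succAbove, hpj]
  apply Set.mem_iUnion.mpr
  refine ⟨k, ?_⟩
  rcases le_or_gt 0 (x k) with h | h
  · left
    exact ⟨p, hpD, (hx_eq 1 (by rw [hht, one_mul, abs_of_nonneg h])).symm⟩
  · right
    exact ⟨p, hpD, (hx_eq (-1) (by rw [hht, abs_of_neg h]; ring)).symm⟩

lemma hm_sphere_lt_top : μH[2] (sphere (0:E3) 1) < ∞ := by
  have hD : μH[2] pDom < ∞ := by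
    refine lt_of_le_of_lt (measure_mono ?_) hm_closedBall_E2_lt_top
    intro p hp
    simp only [pDom, Set.mem_setOf_eq] at hp
    rw [mem_closedBall_zero_iff]
    nlinarith [norm_nonneg p]
  have hpatch : ∀ (k : Fin 3) (σ : ℝ), σ = 1 ∨ σ = -1 → μH[2] (pPatch k σ '' pDom) < ∞ := by
    intro k σ hσ
    refine lt_of_le_of_lt ((pPatch_lipOn k hσ).hausdorffMeasure_image_le (by norm_num)) ?_
    exact ENNReal.mul_lt_top (ENNReal.rpow_lt_top_of_nonneg (by norm_num) ENNReal.coe_ne_top) hD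
  refine lt_of_le_of_lt (measure_mono sphere_subset_patches) ?_
  refine lt_of_le_of_lt (measure_iUnion_fintype_le _ _) ?_
  apply ENNReal.sum_lt_top.mpr
  intro k _
  refine lt_of_le_of_lt (measure_union_le _ _) ?_
  exact ENNReal.add_lt_top.mpr ⟨hpatch k 1 (Or.inl rfl), hpatch k (-1) (Or.inr rfl)⟩

lemma sph_subset_closedBall {b a : ℝ} (hb : 0 < b) (hba : b ≤ a) :
    sph b a ⊆ closedBall (0:E3) a := by
  intro x hx
  simp only [sph, Set.mem_setOf_eq] at hx
  have ha : 0 < a := lt_of_lt_of_le hb hba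
  rw [mem_closedBall_zero_iff]
  have h1 : (x 0)^2 / a^2 + (x 1)^2 / a^2 + (x 2)^2 / a^2 ≤ 1 := by
    have hb2 : (0:ℝ) < b^2 := by positivity
    have ha2 : (0:ℝ) < a^2 := by positivity
    have hle : b^2 ≤ a^2 := by nlinarith
    have t0 : (x 0)^2 / a^2 ≤ (x 0)^2 / b^2 :=
      div_le_div_of_nonneg_left (by positivity) hb2 hle
    have t1 : (x 1)^2 / a^2 ≤ (x 1)^2 / b^2 :=
      div_le_div_of_nonneg_left (by positivity) hb2 hle
    linarith
  have h2 : (x 0)^2 + (x 1)^2 + (x 2)^2 ≤ a^2 := by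
    have ha2 : (0:ℝ) < a^2 := by positivity
    rw [← add_div, ← add_div, div_le_one ha2] at h1
    linarith
  have h3 : ‖x‖^2 ≤ a^2 := by
    rw [norm_sq_E3, Fin.sum_univ_three]; linarith
  nlinarith [norm_nonneg x]

lemma sphS_subset_sph (A B : ℝ) : sphS A B ⊆ sph A B := fun _ hx => le_of_eq hx

lemma hm_sphS_lt_top {b a : ℝ} (hb : 0 < b) (hba : b ≤ a) : μH[2] (sphS b a) < ∞ := by
  have ha : 0 < a := lt_of_lt_of_le hb hba
  set L : E3 → E3 := fun x => (WithLp.equiv 2 (Fin 3 → ℝ)).symm ![b * x 0, b * x 1, a * x 2]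
    with hL
  have hsub : sphS b a ⊆ L '' (sphere (0:E3) 1) := by
    intro x hx
    simp only [sphS, Set.mem_setOf_eq] at hx
    refine ⟨(WithLp.equiv 2 (Fin 3 → ℝ)).symm ![x 0 / b, x 1 / b, x 2 / a], ?_, ?_⟩
    · rw [mem_sphere_zero_iff_norm]
      have h1 : ‖(WithLp.equiv 2 (Fin 3 → ℝ)).symm ![x 0 / b, x 1 / b, x 2 / a]‖^2 = 1 := by
        rw [norm_sq_E3, Fin.sum_univ_three]
        show (x 0 / b)^2 + (x 1 / b)^2 + (x 2 / a)^2 = 1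
        rw [div_pow, div_pow, div_pow]
        exact hx
      nlinarith [norm_nonneg ((WithLp.equiv 2 (Fin 3 → ℝ)).symm ![x 0 / b, x 1 / b, x 2 / a])]
    · ext i
      fin_cases i
      · show b * (x 0 / b) = x 0
        field_simp
      · show b * (x 1 / b) = x 1
        field_simp
      · show a * (x 2 / a) = x 2
        field_simp
  have hlip : LipschitzWith a.toNNReal L := by
    apply LipschitzWith.of_dist_le_mul
    intro x y
    rw [EuclideanSpace.dist_eq, EuclideanSpace.dist_eq]
    have e0 : dist (L x 0) (L y 0) = b * dist (x 0) (y 0) := by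
      show dist (b * x 0) (b * y 0) = _
      rw [Real.dist_eq, Real.dist_eq, ← mul_sub, abs_mul, abs_of_pos hb]
    have e1 : dist (L x 1) (L y 1) = b * dist (x 1) (y 1) := by
      show dist (b * x 1) (b * y 1) = _
      rw [Real.dist_eq, Real.dist_eq, ← mul_sub, abs_mul, abs_of_pos hb]
    have e2 : dist (L x 2) (L y 2) = a * dist (x 2) (y 2) := by
      show dist (a * x 2) (a * y 2) = _
      rw [Real.dist_eq, Real.dist_eq, ← mul_sub, abs_mul, abs_of_pos ha]
    rw [Real.coe_toNNReal _ ha.le]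
    rw [show (a : ℝ) * √(∑ i, dist (x i) (y i)^2) = √(a^2 * ∑ i, dist (x i) (y i)^2) by
      rw [Real.sqrt_mul (by positivity), Real.sqrt_sq ha.le]]
    apply Real.sqrt_le_sqrt
    rw [Fin.sum_univ_three, Fin.sum_univ_three, e0, e1, e2]
    nlinarith [mul_le_mul hba hba hb.le ha.le, sq_nonneg (dist (x 0) (y 0)),
      sq_nonneg (dist (x 1) (y 1)), sq_nonneg (dist (x 2) (y 2))]
  calc μH[2] (sphS b a) ≤ μH[2] (L '' sphere (0:E3) 1) := measure_mono hsub
    _ ≤ (a.toNNReal : ℝ≥0∞) ^ (2:ℝ) * μH[2] (sphere (0:E3) 1) :=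
        hlip.hausdorffMeasure_image_le (by norm_num) _
    _ < ∞ := ENNReal.mul_lt_top
        (ENNReal.rpow_lt_top_of_nonneg (by norm_num) ENNReal.coe_ne_top) hm_sphere_lt_top

lemma sphS_measurable (A B : ℝ) : MeasurableSet (sphS A B) := by
  have hc : Continuous fun x : E3 => (x 0)^2/A^2 + (x 1)^2/A^2 + (x 2)^2/B^2 := by
    apply Continuous.add
    apply Continuous.add
    · exact ((((continuous_apply (0 : Fin 3)).comp (PiLp.continuous_ofLp 2 _))).pow 2).div_const _
    · exact ((((continuous_apply (1 : Fin 3)).comp (PiLp.continuous_ofLp 2 _))).pow 2).div_const _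
    · exact ((((continuous_apply (2 : Fin 3)).comp (PiLp.continuous_ofLp 2 _))).pow 2).div_const _
  exact (isClosed_eq hc continuous_const).measurableSet

lemma sph_isCompact {b a : ℝ} (hb : 0 < b) (hba : b ≤ a) : IsCompact (sph b a) := by
  have hc : Continuous fun x : E3 => (x 0)^2/b^2 + (x 1)^2/b^2 + (x 2)^2/a^2 := by
    apply Continuous.add
    apply Continuous.add
    · exact ((((continuous_apply (0 : Fin 3)).comp (PiLp.continuous_ofLp 2 _))).pow 2).div_const _
    · exact ((((continuous_apply (1 : Fin 3)).comp (PiLp.continuous_ofLp 2 _))).pow 2).div_const _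
    · exact ((((continuous_apply (2 : Fin 3)).comp (PiLp.continuous_ofLp 2 _))).pow 2).div_const _
  exact (isCompact_closedBall (0:E3) a).of_isClosed_subset
    (isClosed_le hc continuous_const) (sph_subset_closedBall hb hba)

lemma sphN_norm_le (A B : ℝ) (x : E3) : ‖sphN A B x‖ ≤ 1 := by
  rw [sphN]
  rcases eq_or_ne (sphGrad A B x) 0 with h | h
  · simp [h]
  · rw [norm_smul, norm_inv, norm_norm, inv_mul_cancel₀ (norm_ne_zero_iff.mpr h)]

lemma sphGrad_continuous (A B : ℝ) : Continuous (sphGrad A B) := by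
  apply (PiLp.continuous_toLp 2 (fun _ : Fin 3 => ℝ)).comp
  apply continuous_pi
  intro i
  fin_cases i
  · exact ((continuous_apply (0 : Fin 3)).comp (PiLp.continuous_ofLp 2 _)).div_const _
  · exact ((continuous_apply (1 : Fin 3)).comp (PiLp.continuous_ofLp 2 _)).div_const _
  · exact ((continuous_apply (2 : Fin 3)).comp (PiLp.continuous_ofLp 2 _)).div_const _

lemma sphN_measurable (A B : ℝ) : Measurable (sphN A B) := by
  apply Measurable.smul (f := fun x => ‖sphGrad A B x‖⁻¹) (g := sphGrad A B)
  · exact ((sphGrad_continuous A B).norm.measurable).inv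
  · exact (sphGrad_continuous A B).measurable

lemma tendsto_rpow_zero {p : ℝ} (hp : 0 < p) :
    Tendsto (fun ε : ℝ => ε ^ p) (𝓝[>] (0:ℝ)) (𝓝 0) := by
  have h := (Real.continuousAt_rpow_const 0 p (Or.inr hp.le)).tendsto
  rw [Real.zero_rpow hp.ne'] at h
  exact h.mono_left nhdsWithin_le_nhds

/-- existence of a recovery sequence. For every `w ∈ C^∞(cl Ω; ℝ³)`
there exists a family `w^ε ∈ H¹(Ω; ℝ³)` such that `ℰ_ε[w^ε] → ℰ[w]` as `ε → 0⁺`, where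
`ℰ_ε[w^ε]` is the energy of the restriction of `w^ε` to `Ω∖∪ᵢ𝒫ᵢ^ε`. -/
theorem stmt11 (cfg : Config) (A : E3 → E3 →L[ℝ] E3) (hA : Linfty cfg.Ω A)
    (hconv : cfg.surfConv A) (w : E3 → E3) (hw : ContDiff ℝ (⊤ : ℕ∞) w) :
    ∃ wε : ℝ → E3 → E3,
      (∀ ε : ℝ, 0 < ε → ε < cfg.ε₀ →
        H1on cfg.Ω (wε ε) ∧ IntegrableOn (fun x => ‖wε ε x‖ ^ 4) cfg.Ω) ∧
      Tendsto (fun ε => cfg.lcE ε (wε ε)) (𝓝[>] (0 : ℝ)) (𝓝 (ElimE cfg.Ω A w)) := by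
  classical
  obtain ⟨r, hr⟩ := cfg.hΩb.subset_closedBall 0
  have hb := cfg.hb
  have ha : 0 < cfg.a := cfg.hb.trans cfg.hba
  set K : Set E3 := closedBall (0:E3) (|r| + cfg.a + 1) with hKdef
  have hKc : IsCompact K := isCompact_closedBall _ _
  have hΩK : cfg.Ω ⊆ K := by
    intro x hx
    have h1 : ‖x‖ ≤ r := mem_closedBall_zero_iff.mp (hr hx)
    rw [hKdef, mem_closedBall_zero_iff]
    have := le_abs_self r
    linarith
  -- bounds for w and its derivative on K
  obtain ⟨M0, hM0⟩ := hKc.exists_bound_of_continuousOn hw.continuous.continuousOn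
  set M : ℝ := max M0 0 with hMdef
  have hM : ∀ x ∈ K, ‖w x‖ ≤ M := fun x hx => (hM0 x hx).trans (le_max_left _ _)
  have hMnn : 0 ≤ M := le_max_right _ _
  obtain ⟨M1, hM1⟩ :=
    hKc.exists_bound_of_continuousOn (hw.continuous_fderiv (by simp)).continuousOn
  set L0 : ℝ := max M1 0 with hL0def
  have hL0nn : 0 ≤ L0 := le_max_right _ _
  have hLip : ∀ x ∈ K, ∀ y ∈ K, ‖w x - w y‖ ≤ L0 * ‖x - y‖ := by
    have hlip : LipschitzOnWith M1.toNNReal w K := by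
      refine Convex.lipschitzOnWith_of_nnnorm_hasFDerivWithin_le
        (f' := fun x => fderiv ℝ w x) ?_ ?_ (convex_closedBall _ _)
      · intro x _
        exact ((hw.differentiable (by simp)).differentiableAt).hasFDerivAt.hasFDerivWithinAt
      · intro x hx
        rw [← NNReal.coe_le_coe, coe_nnnorm, Real.coe_toNNReal']
        exact (hM1 x hx).trans (le_max_left _ _)
    intro x hx y hy
    have h1 := hlip.norm_sub_le hx hy
    have h2 : (M1.toNNReal : ℝ) = L0 := Real.coe_toNNReal' M1
    rw [h2] at h1
    exact h1
  -- continuous integrand of the bulk energy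
  set F : E3 → ℝ := fun x => ‖fderiv ℝ w x‖ ^ 2 + (1 - ‖w x‖ ^ 2) ^ 2 with hFdef
  have hFc : Continuous F := by
    apply Continuous.add
    · exact ((hw.continuous_fderiv (by simp)).norm).pow 2
    · exact ((continuous_const.sub ((hw.continuous.norm).pow 2)).pow 2)
  obtain ⟨MF0, hMF0⟩ := hKc.exists_bound_of_continuousOn hFc.continuousOn
  set MF : ℝ := max MF0 0 with hMFdef
  have hMF : ∀ x ∈ K, ‖F x‖ ≤ MF := fun x hx => (hMF0 x hx).trans (le_max_left _ _)
  have hMFnn : 0 ≤ MF := le_max_right _ _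
  have hFint : IntegrableOn F cfg.Ω := by
    exact (hFc.continuousOn.integrableOn_compact cfg.hΩb.isCompact_closure).mono_set
      subset_closure
  -- integrability of the anchoring term
  set Q : E3 → ℝ := fun x => ⟪A x (w x), w x⟫ with hQdef
  obtain ⟨hAmeas, CA0, hCA0⟩ := hA
  set CA : ℝ := max CA0 0 with hCAdef
  have hCA : ∀ x ∈ cfg.Ω, ‖A x‖ ≤ CA := fun x hx => (hCA0 x hx).trans (le_max_left _ _)
  have hCAnn : 0 ≤ CA := le_max_right _ _
  have hQmeas : AEStronglyMeasurable Q (volume.restrict cfg.Ω) := by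
    have h1 : AEStronglyMeasurable (fun x => A x (w x)) (volume.restrict cfg.Ω) := by
      have h2 : AEStronglyMeasurable (fun x => (A x, w x)) (volume.restrict cfg.Ω) :=
        hAmeas.prodMk hw.continuous.aestronglyMeasurable
      exact (isBoundedBilinearMap_apply.continuous).comp_aestronglyMeasurable h2
    exact h1.inner hw.continuous.aestronglyMeasurable
  have hQint : IntegrableOn Q cfg.Ω := by
    refine Integrable.mono' (g := fun _ => CA * M ^ 2)
      (integrableOn_const (C := CA * M ^ 2) cfg.hΩb.measure_lt_top.ne) hQmeas ?_
    rw [MeasureTheory.ae_restrict_iff' cfg.hΩo.measurableSet]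
    refine Filter.Eventually.of_forall (fun x hx => ?_)
    have h1 : |⟪A x (w x), w x⟫| ≤ ‖A x (w x)‖ * ‖w x‖ := abs_real_inner_le_norm _ _
    have h2 : ‖A x (w x)‖ ≤ ‖A x‖ * ‖w x‖ := (A x).le_opNorm _
    have h3 : ‖w x‖ ≤ M := hM x (hΩK hx)
    have h4 : ‖A x‖ ≤ CA := hCA x hx
    have h5 : (0:ℝ) ≤ ‖w x‖ := norm_nonneg _
    have h6 : (0:ℝ) ≤ ‖A x‖ := norm_nonneg _
    calc ‖Q x‖ = |⟪A x (w x), w x⟫| := rfl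
      _ ≤ ‖A x (w x)‖ * ‖w x‖ := h1
      _ ≤ (CA * M) * M :=
          mul_le_mul (h2.trans (mul_le_mul h4 h3 h5 hCAnn)) h3 h5 (by positivity)
      _ = CA * M ^ 2 := by ring
  have hElim : ElimE cfg.Ω A w = (∫ x in cfg.Ω, F x) + ∫ x in cfg.Ω, Q x := by
    rw [ElimE, ← MeasureTheory.integral_add hFint hQint]
  -- H¹ and L⁴ regularity on Ω
  refine ⟨fun _ => w, ?_, ?_⟩
  · intro ε _ _
    refine ⟨⟨hw.continuous, fun x _ => (hw.differentiable (by simp)).differentiableAt, ?_, ?_⟩, ?_⟩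
    · exact (((hw.continuous.norm.pow 2).continuousOn).integrableOn_compact
        cfg.hΩb.isCompact_closure).mono_set subset_closure
    · exact ((((hw.continuous_fderiv (by simp)).norm.pow 2).continuousOn).integrableOn_compact
        cfg.hΩb.isCompact_closure).mono_set subset_closure
    · exact (((hw.continuous.norm.pow 4).continuousOn).integrableOn_compact
        cfg.hΩb.isCompact_closure).mono_set subset_closure
  -- the energy convergence
  have hS_fin : μH[2] (sphS cfg.b cfg.a) < ∞ := hm_sphS_lt_top cfg.hb cfg.hba.le
  set S : ℝ := (μH[2] (sphS cfg.b cfg.a)).toReal with hSdef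
  have hSnn : 0 ≤ S := ENNReal.toReal_nonneg
  set κ : ℝ := (volume (ball (0:E3) 1)).toReal with hκdef
  have hκnn : 0 ≤ κ := ENNReal.toReal_nonneg
  set G : ℝ → ℝ := fun ε => cfg.g * ε ^ (3 : ℕ) *
      ∑ i : Fin (cfg.Nε ε),
        ∫ y in sphS cfg.b cfg.a,
          ⟪w (cfg.xc ε i), cfg.Rot ε i (sphN cfg.b cfg.a y)⟫ ^ 2 ∂μH[2] with hGdef
  have hGconv : Tendsto G (𝓝[>] (0:ℝ)) (𝓝 (∫ x in cfg.Ω, Q x)) :=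
    hconv w hw.continuous.continuousOn
  have hsmall : Set.Ioo (0:ℝ) (min cfg.ε₀ 1) ∈ 𝓝[>] (0:ℝ) :=
    Ioo_mem_nhdsGT_of_mem ⟨le_refl 0, lt_min cfg.hε₀ one_pos⟩
  -- key surface estimate
  have hkey : ∀ ε ∈ Set.Ioo (0:ℝ) (min cfg.ε₀ 1),
      |cfg.surfE ε w - G ε| ≤ (|cfg.g| * cfg.NN * (L0 * cfg.a * (2*M) * S)) * ε ^ cfg.α := by
    intro ε hε
    obtain ⟨hε0, hεlt⟩ := hε
    have hεε₀ : ε < cfg.ε₀ := lt_of_lt_of_le hεlt (min_le_left _ _)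
    have hε1 : ε ≤ 1 := (lt_of_lt_of_le hεlt (min_le_right _ _)).le
    set s : ℝ := ε ^ cfg.α with hsdef
    have hs0 : 0 < s := Real.rpow_pos_of_pos hε0 _
    have hs1 : s ≤ 1 := Real.rpow_le_one hε0.le hε1 (by linarith [cfg.hα1])
    have hySS : ∀ y ∈ sphS cfg.b cfg.a, ‖y‖ ≤ cfg.a := fun y hy =>
      mem_closedBall_zero_iff.mp
        (sph_subset_closedBall cfg.hb cfg.hba.le (sphS_subset_sph _ _ hy))
    have hcΩ : ∀ i, cfg.xc ε i ∈ cfg.Ω := fun i =>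
      cfg.hball ε hε0 hεε₀ i (mem_closedBall_self (by have hd := cfg.hd; positivity))
    have hcK : ∀ i, cfg.xc ε i ∈ K := fun i => hΩK (hcΩ i)
    have hptK : ∀ (i) (y), y ∈ sphS cfg.b cfg.a →
        cfg.xc ε i + s • (cfg.Rot ε i) y ∈ K := by
      intro i y hy
      rw [hKdef, mem_closedBall_zero_iff]
      have h1 : ‖cfg.xc ε i‖ ≤ r := mem_closedBall_zero_iff.mp (hr (hcΩ i))
      have h2 : ‖s • (cfg.Rot ε i) y‖ = s * ‖y‖ := by
        rw [norm_smul, (cfg.Rot ε i).norm_map, Real.norm_eq_abs, abs_of_pos hs0]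
      have h3 : s * ‖y‖ ≤ 1 * cfg.a :=
        mul_le_mul hs1 (hySS y hy) (norm_nonneg _) one_pos.le
      have h4 := norm_add_le (cfg.xc ε i) (s • (cfg.Rot ε i) y)
      have h5 := le_abs_self r
      rw [h2] at h4
      linarith
    set J : Fin (cfg.Nε ε) → ℝ := fun i =>
      ∫ y in sphS cfg.b cfg.a,
        ⟪w (cfg.xc ε i + s • (cfg.Rot ε i) y), cfg.Rot ε i (sphN cfg.b cfg.a y)⟫ ^ 2
          ∂μH[2] with hJdef
    set Kk : Fin (cfg.Nε ε) → ℝ := fun i =>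
      ∫ y in sphS cfg.b cfg.a,
        ⟪w (cfg.xc ε i), cfg.Rot ε i (sphN cfg.b cfg.a y)⟫ ^ 2 ∂μH[2] with hKkdef
    -- change of variables
    have hIi : ∀ i, (∫ y in cfg.surf ε i, ⟪w y, cfg.normal ε i y⟫ ^ 2 ∂μH[2])
        = s ^ 2 * J i := by
      intro i
      have h1 : cfg.surf ε i
          = (fun y => cfg.xc ε i + s • (cfg.Rot ε i) y) '' sphS cfg.b cfg.a := rfl
      rw [h1, setIntegral_sim _ hs0]
      congr 1
      apply MeasureTheory.setIntegral_congr_fun (sphS_measurable _ _)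
      intro y _
      have h2 : cfg.normal ε i (cfg.xc ε i + s • (cfg.Rot ε i) y)
          = cfg.Rot ε i (sphN cfg.b cfg.a y) := by
        show (cfg.Rot ε i) (sphN cfg.b cfg.a
          (s⁻¹ • (cfg.Rot ε i).symm (cfg.xc ε i + s • (cfg.Rot ε i) y - cfg.xc ε i))) = _
        rw [add_sub_cancel_left, LinearIsometryEquiv.map_smul,
          LinearIsometryEquiv.symm_apply_apply, inv_smul_smul₀ hs0.ne']
      show ⟪w (cfg.xc ε i + s • (cfg.Rot ε i) y),
          cfg.normal ε i (cfg.xc ε i + s • (cfg.Rot ε i) y)⟫ ^ 2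
        = ⟪w (cfg.xc ε i + s • (cfg.Rot ε i) y), cfg.Rot ε i (sphN cfg.b cfg.a y)⟫ ^ 2
      rw [h2]
    have hpow : ε ^ (3 - 2*cfg.α) * s^2 = ε ^ (3:ℕ) := by
      rw [hsdef, ← Real.rpow_natCast (ε ^ cfg.α) 2, ← Real.rpow_mul hε0.le,
        ← Real.rpow_add hε0, ← Real.rpow_natCast ε 3]
      congr 1; push_cast; ring
    have hsurfE : cfg.surfE ε w = cfg.g * ε ^ (3:ℕ) * ∑ i, J i := by
      rw [Config.surfE]
      rw [Finset.sum_congr rfl (fun i _ => hIi i), ← Finset.mul_sum]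
      calc cfg.g * ε ^ (3 - 2*cfg.α) * (s^2 * ∑ i, J i)
          = cfg.g * (ε ^ (3 - 2*cfg.α) * s^2) * ∑ i, J i := by ring
        _ = cfg.g * ε ^ (3:ℕ) * ∑ i, J i := by rw [hpow]
    -- per-particle comparison
    have hintJ : ∀ i, IntegrableOn (fun y =>
        ⟪w (cfg.xc ε i + s • (cfg.Rot ε i) y), cfg.Rot ε i (sphN cfg.b cfg.a y)⟫ ^ 2)
        (sphS cfg.b cfg.a) μH[2] := by
      intro i
      have hmeas : Measurable (fun y =>
          ⟪w (cfg.xc ε i + s • (cfg.Rot ε i) y), cfg.Rot ε i (sphN cfg.b cfg.a y)⟫ ^ 2) := by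
        apply Measurable.pow_const
        apply Measurable.inner
        · exact (hw.continuous.comp
            (continuous_const.add ((cfg.Rot ε i).continuous.const_smul s))).measurable
        · exact (cfg.Rot ε i).continuous.measurable.comp (sphN_measurable _ _)
      refine Integrable.mono' (g := fun _ => M ^ 2)
        (integrableOn_const (C := M ^ 2) hS_fin.ne) hmeas.aestronglyMeasurable ?_
      rw [MeasureTheory.ae_restrict_iff' (sphS_measurable _ _)]
      refine Filter.Eventually.of_forall (fun y hy => ?_)
      have hb1 : |⟪w (cfg.xc ε i + s • (cfg.Rot ε i) y), cfg.Rot ε i (sphN cfg.b cfg.a y)⟫|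
          ≤ M := by
        refine le_trans (abs_real_inner_le_norm _ _) ?_
        have hn : ‖cfg.Rot ε i (sphN cfg.b cfg.a y)‖ ≤ 1 := by
          rw [(cfg.Rot ε i).norm_map]; exact sphN_norm_le _ _ _
        have hu : ‖w (cfg.xc ε i + s • (cfg.Rot ε i) y)‖ ≤ M := hM _ (hptK i y hy)
        calc ‖w (cfg.xc ε i + s • (cfg.Rot ε i) y)‖ * ‖cfg.Rot ε i (sphN cfg.b cfg.a y)‖
            ≤ M * 1 := mul_le_mul hu hn (norm_nonneg _) hMnn
          _ = M := mul_one M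
      rw [Real.norm_eq_abs, abs_pow, sq_abs]
      have hsq := pow_le_pow_left₀ (abs_nonneg _) hb1 2
      rw [sq_abs] at hsq
      exact hsq
    have hintK : ∀ i, IntegrableOn (fun y =>
        ⟪w (cfg.xc ε i), cfg.Rot ε i (sphN cfg.b cfg.a y)⟫ ^ 2)
        (sphS cfg.b cfg.a) μH[2] := by
      intro i
      have hmeas : Measurable (fun y =>
          ⟪w (cfg.xc ε i), cfg.Rot ε i (sphN cfg.b cfg.a y)⟫ ^ 2) := by
        apply Measurable.pow_const
        apply Measurable.inner
        · exact measurable_const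
        · exact (cfg.Rot ε i).continuous.measurable.comp (sphN_measurable _ _)
      refine Integrable.mono' (g := fun _ => M ^ 2)
        (integrableOn_const (C := M ^ 2) hS_fin.ne) hmeas.aestronglyMeasurable ?_
      rw [MeasureTheory.ae_restrict_iff' (sphS_measurable _ _)]
      refine Filter.Eventually.of_forall (fun y hy => ?_)
      have hb1 : |⟪w (cfg.xc ε i), cfg.Rot ε i (sphN cfg.b cfg.a y)⟫| ≤ M := by
        refine le_trans (abs_real_inner_le_norm _ _) ?_
        have hn : ‖cfg.Rot ε i (sphN cfg.b cfg.a y)‖ ≤ 1 := by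
          rw [(cfg.Rot ε i).norm_map]; exact sphN_norm_le _ _ _
        calc ‖w (cfg.xc ε i)‖ * ‖cfg.Rot ε i (sphN cfg.b cfg.a y)‖
            ≤ M * 1 := mul_le_mul (hM _ (hcK i)) hn (norm_nonneg _) hMnn
          _ = M := mul_one M
      rw [Real.norm_eq_abs, abs_pow, sq_abs]
      have hsq := pow_le_pow_left₀ (abs_nonneg _) hb1 2
      rw [sq_abs] at hsq
      exact hsq
    have hJK : ∀ i, |J i - Kk i| ≤ ((L0 * (s * cfg.a)) * (2 * M)) * S := by
      intro i
      have hsub : J i - Kk i = ∫ y in sphS cfg.b cfg.a,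
          (⟪w (cfg.xc ε i + s • (cfg.Rot ε i) y), cfg.Rot ε i (sphN cfg.b cfg.a y)⟫ ^ 2
            - ⟪w (cfg.xc ε i), cfg.Rot ε i (sphN cfg.b cfg.a y)⟫ ^ 2) ∂μH[2] :=
        (MeasureTheory.integral_sub (hintJ i) (hintK i)).symm
      rw [hsub, show ((L0 * (s * cfg.a)) * (2 * M)) * S
          = ((L0 * (s * cfg.a)) * (2 * M)) * (μH[2] (sphS cfg.b cfg.a)).toReal
          from by rw [hSdef], ← Real.norm_eq_abs]
      apply norm_setIntegral_le_of_norm_le_const hS_fin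
      · intro y hy
        set u1 := w (cfg.xc ε i + s • (cfg.Rot ε i) y) with hu1def
        set u2 := w (cfg.xc ε i) with hu2def
        set n := cfg.Rot ε i (sphN cfg.b cfg.a y) with hndef
        have hn : ‖n‖ ≤ 1 := by
          rw [hndef, (cfg.Rot ε i).norm_map]; exact sphN_norm_le _ _ _
        have hu1 : ‖u1‖ ≤ M := hM _ (hptK i y hy)
        have hu2 : ‖u2‖ ≤ M := hM _ (hcK i)
        have hdiff : ‖u1 - u2‖ ≤ L0 * (s * cfg.a) := by
          have h1 := hLip _ (hptK i y hy) _ (hcK i)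
          have h2 : ‖cfg.xc ε i + s • (cfg.Rot ε i) y - cfg.xc ε i‖ = s * ‖y‖ := by
            rw [add_sub_cancel_left, norm_smul, (cfg.Rot ε i).norm_map,
              Real.norm_eq_abs, abs_of_pos hs0]
          rw [h2] at h1
          refine h1.trans ?_
          exact mul_le_mul_of_nonneg_left
            (mul_le_mul_of_nonneg_left (hySS y hy) hs0.le) hL0nn
        have hfact : ⟪u1, n⟫ ^ 2 - ⟪u2, n⟫ ^ 2
            = ⟪u1 - u2, n⟫ * ⟪u1 + u2, n⟫ := by
          rw [inner_sub_left, inner_add_left]; ring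
        have hb1 : |⟪u1 - u2, n⟫| ≤ L0 * (s * cfg.a) := by
          refine le_trans (abs_real_inner_le_norm _ _) ?_
          calc ‖u1 - u2‖ * ‖n‖ ≤ (L0 * (s * cfg.a)) * 1 :=
                mul_le_mul hdiff hn (norm_nonneg _) (by positivity)
            _ = L0 * (s * cfg.a) := mul_one _
        have hb2 : |⟪u1 + u2, n⟫| ≤ 2 * M := by
          refine le_trans (abs_real_inner_le_norm _ _) ?_
          calc ‖u1 + u2‖ * ‖n‖ ≤ (2 * M) * 1 := by
                refine mul_le_mul ?_ hn (norm_nonneg _) (by positivity)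
                calc ‖u1 + u2‖ ≤ ‖u1‖ + ‖u2‖ := norm_add_le _ _
                  _ ≤ 2 * M := by linarith
            _ = 2 * M := mul_one _
        rw [Real.norm_eq_abs, hfact, abs_mul]
        exact mul_le_mul hb1 hb2 (abs_nonneg _) (by positivity)
    -- summation
    set TJ : ℝ := ∑ i, J i with hTJ
    set TK : ℝ := ∑ i, Kk i with hTK
    have hsumJK : |TJ - TK|
        ≤ (cfg.Nε ε : ℝ) * (((L0 * (s * cfg.a)) * (2 * M)) * S) := by
      rw [hTJ, hTK]
      rw [← Finset.sum_sub_distrib]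
      refine le_trans (Finset.abs_sum_le_sum_abs _ _) ?_
      refine le_trans (Finset.sum_le_card_nsmul _ _ _ (fun i _ => hJK i)) ?_
      rw [Finset.card_univ, Fintype.card_fin, nsmul_eq_mul]
    have hεN : ε ^ (3:ℕ) * (cfg.Nε ε : ℝ) ≤ cfg.NN := by
      have h := cfg.hcount ε hε0 hεε₀
      calc ε ^ (3:ℕ) * (cfg.Nε ε : ℝ) ≤ ε ^ (3:ℕ) * (cfg.NN * ε⁻¹ ^ 3) :=
            mul_le_mul_of_nonneg_left h (by positivity)
        _ = cfg.NN * (ε ^ (3:ℕ) * (ε ^ (3:ℕ))⁻¹) := by rw [inv_pow]; ring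
        _ = cfg.NN := by rw [mul_inv_cancel₀ (by positivity), mul_one]
    have hGval : G ε = cfg.g * ε ^ (3:ℕ) * TK := by rw [hGdef, hTK]
    have hsurfE' : cfg.surfE ε w = cfg.g * ε ^ (3:ℕ) * TJ := by rw [hsurfE, hTJ]
    calc |cfg.surfE ε w - G ε|
        = |cfg.g| * ε ^ (3:ℕ) * |TJ - TK| := by
          rw [hsurfE', hGval, ← mul_sub, abs_mul, abs_mul,
            abs_of_pos (by positivity : (0:ℝ) < ε ^ (3:ℕ))]
      _ ≤ |cfg.g| * ε ^ (3:ℕ)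
            * ((cfg.Nε ε : ℝ) * (((L0 * (s * cfg.a)) * (2 * M)) * S)) :=
          mul_le_mul_of_nonneg_left hsumJK (by positivity)
      _ = (ε ^ (3:ℕ) * (cfg.Nε ε : ℝ)) * (|cfg.g| * ((L0 * (s * cfg.a)) * (2 * M)) * S) := by
          ring
      _ ≤ cfg.NN * (|cfg.g| * ((L0 * (s * cfg.a)) * (2 * M)) * S) :=
          mul_le_mul_of_nonneg_right hεN (by positivity)
      _ = (|cfg.g| * cfg.NN * (L0 * cfg.a * (2*M) * S)) * s := by ring
  -- key volume estimate
  have hvolkey : ∀ ε ∈ Set.Ioo (0:ℝ) (min cfg.ε₀ 1),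
      |(∫ x in cfg.dom ε, F x) - ∫ x in cfg.Ω, F x|
        ≤ (MF * (cfg.NN * cfg.a^3 * κ)) * ε ^ (3 * cfg.α - 3) := by
    intro ε hε
    obtain ⟨hε0, hεlt⟩ := hε
    have hεε₀ : ε < cfg.ε₀ := lt_of_lt_of_le hεlt (min_le_left _ _)
    have hε1 : ε ≤ 1 := (lt_of_lt_of_le hεlt (min_le_right _ _)).le
    set s : ℝ := ε ^ cfg.α with hsdef
    have hs0 : 0 < s := Real.rpow_pos_of_pos hε0 _
    set U : Set E3 := ⋃ i, cfg.particle ε i with hUdef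
    have hpartc : ∀ i, IsCompact (cfg.particle ε i) := by
      intro i
      have hcont : Continuous fun y : E3 => cfg.xc ε i + s • (cfg.Rot ε i) y :=
        continuous_const.add ((cfg.Rot ε i).continuous.const_smul s)
      exact (sph_isCompact cfg.hb cfg.hba.le).image hcont
    have hUmeas : MeasurableSet U := MeasurableSet.iUnion (fun i => (hpartc i).measurableSet)
    have hpsub : ∀ i, cfg.particle ε i ⊆ closedBall (cfg.xc ε i) (s * cfg.a) := by
      rintro i y ⟨u, hu, rfl⟩
      rw [mem_closedBall, dist_eq_norm, add_sub_cancel_left, norm_smul,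
        (cfg.Rot ε i).norm_map, Real.norm_eq_abs, abs_of_pos hs0]
      exact mul_le_mul_of_nonneg_left
        (mem_closedBall_zero_iff.mp (sph_subset_closedBall cfg.hb cfg.hba.le hu)) hs0.le
    have hμU : volume (cfg.Ω ∩ U)
        ≤ (cfg.Nε ε : ℝ≥0∞) * (ENNReal.ofReal ((s*cfg.a)^3) * volume (ball (0:E3) 1)) := by
      refine le_trans (measure_mono inter_subset_right) ?_
      calc volume U ≤ ∑ i, volume (cfg.particle ε i) := measure_iUnion_fintype_le _ _
        _ ≤ ∑ _i : Fin (cfg.Nε ε),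
              (ENNReal.ofReal ((s*cfg.a)^3) * volume (ball (0:E3) 1)) := by
            apply Finset.sum_le_sum
            intro i _
            calc volume (cfg.particle ε i)
                ≤ volume (closedBall (cfg.xc ε i) (s*cfg.a)) := measure_mono (hpsub i)
              _ = ENNReal.ofReal ((s*cfg.a)^(Module.finrank ℝ E3)) * volume (ball (0:E3) 1) :=
                  Measure.addHaar_closedBall volume _ (by positivity)
              _ = _ := by rw [finrank_euclideanSpace_fin]
        _ = (cfg.Nε ε : ℝ≥0∞) * _ := by
            rw [Finset.sum_const, Finset.card_univ, Fintype.card_fin, nsmul_eq_mul]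
    have hμUr : (volume (cfg.Ω ∩ U)).toReal ≤ (cfg.Nε ε : ℝ) * ((s*cfg.a)^3 * κ) := by
      have h2 : ((cfg.Nε ε : ℝ≥0∞) * (ENNReal.ofReal ((s*cfg.a)^3)
          * volume (ball (0:E3) 1))).toReal = (cfg.Nε ε : ℝ) * ((s*cfg.a)^3 * κ) := by
        rw [ENNReal.toReal_mul, ENNReal.toReal_mul, ENNReal.toReal_ofReal (by positivity)]
        simp only [ENNReal.toReal_natCast, hκdef]
      rw [← h2]
      apply ENNReal.toReal_mono ?_ hμU
      exact ENNReal.mul_ne_top (ENNReal.natCast_ne_top _)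
        (ENNReal.mul_ne_top ENNReal.ofReal_ne_top measure_ball_lt_top.ne)
    have hdec : (∫ x in cfg.dom ε, F x) = (∫ x in cfg.Ω, F x) - ∫ x in cfg.Ω ∩ U, F x := by
      have hdom : cfg.dom ε = cfg.Ω \ (cfg.Ω ∩ U) := by
        rw [Config.dom, Set.diff_self_inter]
      rw [hdom]
      exact MeasureTheory.integral_diff (cfg.hΩo.measurableSet.inter hUmeas) hFint
        inter_subset_left
    have hIb : |∫ x in cfg.Ω ∩ U, F x| ≤ MF * (volume (cfg.Ω ∩ U)).toReal := by
      apply norm_setIntegral_le_of_norm_le_const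
        (lt_of_le_of_lt (measure_mono inter_subset_left) cfg.hΩb.measure_lt_top)
        (fun x hx => hMF x (hΩK hx.1))
    have halg : ε⁻¹^3 * s^3 = ε ^ (3 * cfg.α - 3) := by
      rw [hsdef, inv_pow, ← Real.rpow_natCast ε 3, ← Real.rpow_natCast (ε ^ cfg.α) 3,
        ← Real.rpow_mul hε0.le, ← Real.rpow_neg hε0.le, ← Real.rpow_add hε0]
      norm_num
      ring_nf
    have hcnt := cfg.hcount ε hε0 hεε₀
    calc |(∫ x in cfg.dom ε, F x) - ∫ x in cfg.Ω, F x|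
        = |∫ x in cfg.Ω ∩ U, F x| := by rw [hdec, sub_sub_cancel_left, abs_neg]
      _ ≤ MF * (volume (cfg.Ω ∩ U)).toReal := hIb
      _ ≤ MF * ((cfg.Nε ε : ℝ) * ((s*cfg.a)^3 * κ)) := by
          exact mul_le_mul_of_nonneg_left hμUr hMFnn
      _ ≤ MF * ((cfg.NN * ε⁻¹^3) * ((s*cfg.a)^3 * κ)) := by
          apply mul_le_mul_of_nonneg_left ?_ hMFnn
          apply mul_le_mul_of_nonneg_right hcnt (by positivity)
      _ = (MF * (cfg.NN * cfg.a^3 * κ)) * (ε⁻¹^3 * s^3) := by ring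
      _ = (MF * (cfg.NN * cfg.a^3 * κ)) * ε ^ (3 * cfg.α - 3) := by rw [halg]
  -- assemble
  have hsurf : Tendsto (fun ε => cfg.surfE ε w) (𝓝[>] (0:ℝ)) (𝓝 (∫ x in cfg.Ω, Q x)) := by
    have hD : Tendsto (fun ε => cfg.surfE ε w - G ε) (𝓝[>] (0:ℝ)) (𝓝 0) := by
      apply squeeze_zero_norm' (a := fun ε =>
        (|cfg.g| * cfg.NN * (L0 * cfg.a * (2*M) * S)) * ε ^ cfg.α)
      · filter_upwards [hsmall] with ε hε
        exact hkey ε hε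
      · have := (tendsto_rpow_zero (p := cfg.α) (by linarith [cfg.hα1])).const_mul
          (|cfg.g| * cfg.NN * (L0 * cfg.a * (2*M) * S))
        simpa using this
    have h1 := hGconv.add hD
    rw [add_zero] at h1
    have h2 : (fun ε => cfg.surfE ε w) = fun ε => G ε + (cfg.surfE ε w - G ε) := by
      funext ε; ring
    rw [h2]
    exact h1
  have hvol : Tendsto (fun ε => ∫ x in cfg.dom ε, F x) (𝓝[>] (0:ℝ))
      (𝓝 (∫ x in cfg.Ω, F x)) := by
    have hD : Tendsto (fun ε => (∫ x in cfg.dom ε, F x) - ∫ x in cfg.Ω, F x)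
        (𝓝[>] (0:ℝ)) (𝓝 0) := by
      apply squeeze_zero_norm' (a := fun ε =>
        (MF * (cfg.NN * cfg.a^3 * κ)) * ε ^ (3 * cfg.α - 3))
      · filter_upwards [hsmall] with ε hε
        exact hvolkey ε hε
      · have := (tendsto_rpow_zero (p := 3 * cfg.α - 3)
          (by linarith [cfg.hα1])).const_mul (MF * (cfg.NN * cfg.a^3 * κ))
        simpa using this
    have h1 := hD.add (tendsto_const_nhds (x := ∫ x in cfg.Ω, F x))
    rw [zero_add] at h1
    have h2 : (fun ε => ∫ x in cfg.dom ε, F x)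
        = fun ε => ((∫ x in cfg.dom ε, F x) - ∫ x in cfg.Ω, F x) + ∫ x in cfg.Ω, F x := by
      funext ε; ring
    rw [h2]
    exact h1
  rw [hElim]
  have hfin := hvol.add hsurf
  have h3 : (fun ε => cfg.lcE ε w)
      = fun ε => (∫ x in cfg.dom ε, F x) + cfg.surfE ε w := rfl
  rw [h3]
  exact hfin
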